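/- There exists a sequence of rational numbers that is a computable sequence of real numbers but not a computable sequence of rational numbers. -/

import Mathlib

/-!
Let `x n = 2⁻¹ ^ s` if the `n`-th program halts on input `0`, `s` being the least number of
steps it needs, and `x n = 0` otherwise. Running the programs for `k` steps computes `x` up to
`2⁻¹ ^ k`, uniformly in `n` and `k`; but `x n ≠ 0` exactly when the `n`-th program halts,
so `x` itself is not computable.

The technical point is that `s ↦ 2⁻¹ ^ s` is computable for Mathlib's coding of the rationals:
that coding is the counting function of the range of the coding by numerator and denominator,
and this range is decided by a bounded coprimality test.
-/

/-- `x` is a computable sequence of real numbers. -/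
def CompRealSeq (x : ℕ → ℝ) : Prop :=
  ∃ q : ℕ → ℚ, Computable q ∧ ∀ n k : ℕ, |x n - (q (Nat.pair n k) : ℝ)| ≤ (2 : ℝ)⁻¹ ^ k

open Encodable Denumerable Nat.Partrec

attribute [local instance] Encodable.decidableRangeEncode

theorem Primrec.nat_count {p : ℕ → Prop} [DecidablePred p] (hp : PrimrecPred p) :
    Primrec (Nat.count p) :=
  (list_length.comp ((listFilter hp).comp list_range)).of_eq fun n => by
    simp [Nat.count, List.countP_eq_length_filter]

theorem Primrec.nat_pow : Primrec₂ ((· ^ ·) : ℕ → ℕ → ℕ) :=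
  Primrec₂.unpaired'.1 Nat.Primrec.pow

theorem Primrec.nat_dvd : PrimrecRel ((· ∣ ·) : ℕ → ℕ → Prop) :=
  PrimrecPred.of_eq (Primrec.eq.comp (nat_mod.comp snd fst) (const 0)) fun _ =>
    Nat.dvd_iff_mod_eq_zero.symm

theorem Nat.coprime_iff_forall_le_add {a b : ℕ} :
    a.Coprime b ↔ ∀ d ≤ a + b, d ∣ a → d ∣ b → d = 1 := by
  refine ⟨fun h d _ hda hdb => Nat.dvd_one.mp (h ▸ Nat.dvd_gcd hda hdb), fun h => ?_⟩
  refine h _ ?_ (Nat.gcd_dvd_left a b) (Nat.gcd_dvd_right a b)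
  rcases Nat.eq_zero_or_pos a with rfl | ha
  · simp
  · exact (Nat.gcd_le_left b ha).trans (Nat.le_add_right a b)

theorem Primrec.nat_coprime : PrimrecRel Nat.Coprime := by
  have hdvd : PrimrecRel fun (d : ℕ) (ab : ℕ × ℕ) => d ∣ ab.1 → d ∣ ab.2 → d = 1 :=
    ((Primrec.nat_dvd.comp fst (fst.comp snd)).not.or
      ((Primrec.nat_dvd.comp fst (snd.comp snd)).not.or (Primrec.eq.comp fst (const 1)))).of_eq
      fun p => by tauto
  have := (PrimrecRel.forall_mem_list hdvd).comp
    (f := fun p : ℕ × ℕ => List.range (p.1 + p.2 + 1)) (g := id)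
    (list_range.comp (succ.comp (nat_add.comp fst snd))) .id
  exact this.of_eq fun p => by simp [Nat.coprime_iff_forall_le_add]

theorem Primrec.int_natAbs : Primrec Int.natAbs :=
  (nat_div.comp (succ.comp Primrec.encode) (const 2)).of_eq fun z => by
    cases z with
    | ofNat n => show (2 * n + 1) / 2 = n; omega
    | negSucc n => show (2 * n + 1 + 1) / 2 = n + 1; omega

theorem Denumerable.encode_ofEncodableOfInfinite {α : Type*} [Encodable α] [Infinite α]
    (a : α) :
    @encode α (ofEncodableOfInfinite α).toEncodable a =
      Nat.count (· ∈ Set.range (encode : α → ℕ)) (encode a) :=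
  rfl

-- `encode` on `ℚ` is `Rat.instEncodable`; `Primcodable ℚ` uses the recoding by
-- `Denumerable.ofEncodableOfInfinite`.
theorem Rat.encode_eq_pair (q : ℚ) : encode q = Nat.pair (encode q.num) q.den :=
  rfl

theorem Rat.mem_range_encode_iff (n : ℕ) :
    n ∈ Set.range (encode : ℚ → ℕ) ↔
      0 < n.unpair.2 ∧ (ofNat ℤ n.unpair.1).natAbs.Coprime n.unpair.2 := by
  constructor
  · rintro ⟨q, rfl⟩
    rw [Rat.encode_eq_pair, Nat.unpair_pair, ofNat_encode]
    exact ⟨q.pos, q.reduced⟩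
  · rintro ⟨hden, hred⟩
    refine ⟨⟨ofNat ℤ n.unpair.1, n.unpair.2, hden.ne', hred⟩, ?_⟩
    show Nat.pair (encode (ofNat ℤ n.unpair.1)) n.unpair.2 = n
    rw [encode_ofNat, Nat.pair_unpair]

theorem Rat.primrecPred_mem_range_encode : PrimrecPred (· ∈ Set.range (encode : ℚ → ℕ)) :=
  ((Primrec.nat_lt.comp (Primrec.const 0) (Primrec.snd.comp Primrec.unpair)).and
    (Primrec.nat_coprime.comp
      (Primrec.int_natAbs.comp ((Primrec.ofNat ℤ).comp (Primrec.fst.comp Primrec.unpair)))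
      (Primrec.snd.comp Primrec.unpair))).of_eq fun n => (Rat.mem_range_encode_iff n).symm

theorem Primrec.rat_inv_natCast : Primrec fun n : ℕ => (n : ℚ)⁻¹ := by
  refine Primrec.encode_iff.mp (((Primrec.nat_count Rat.primrecPred_mem_range_encode).comp
    (Primrec.ite (Primrec.eq.comp .id (.const 0)) (.const (Nat.pair 0 1))
      (Primrec₂.natPair.comp (.const 2) .id))).of_eq fun n => ?_)
  refine Eq.trans ?_ (Denumerable.encode_ofEncodableOfInfinite ((n : ℚ)⁻¹)).symm
  rw [Rat.encode_eq_pair, Rat.inv_natCast_num, Rat.inv_natCast_den]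
  rcases Nat.eq_zero_or_pos n with rfl | hn
  · rfl
  · simp only [id, if_neg hn.ne', Int.sign_natCast_of_ne_zero hn.ne']
    rfl

def HaltsWithin (c : Code) (s : ℕ) : Prop :=
  (c.evaln s 0).isSome

instance : DecidableRel HaltsWithin := fun c s =>
  inferInstanceAs (Decidable ((c.evaln s 0).isSome = true))

theorem exists_haltsWithin_iff (c : Code) : (∃ s, HaltsWithin c s) ↔ (c.eval 0).Dom := by
  simp only [HaltsWithin, Option.isSome_iff_exists, Part.dom_iff_mem, Code.evaln_complete]
  exact exists_comm

theorem primrecRel_haltsWithin : PrimrecRel HaltsWithin :=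
  Primrec₂.primrecRel <| (Primrec.option_isSome.comp
    (Code.primrec_evaln.comp ((Primrec.snd.pair Primrec.fst).pair (.const 0)))).of_eq fun _ =>
      Bool.decide_eq_true.symm

open Classical in
noncomputable def haltingWeight (c : Code) : ℚ :=
  if h : ∃ s, HaltsWithin c s then (2 ^ Nat.find h)⁻¹ else 0

theorem haltingWeight_ne_zero_iff (c : Code) : haltingWeight c ≠ 0 ↔ (c.eval 0).Dom := by
  rw [← exists_haltsWithin_iff, haltingWeight]
  split_ifs with h <;> simp [h]

-- Once the program has halted within `k` steps, the `Nat.findGreatest` is its halting time.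
def haltingWeightApprox (c : Code) (k : ℕ) : ℚ :=
  if ∃ s ≤ k, HaltsWithin c s then
    (2 ^ Nat.findGreatest (fun s => ∀ t < s, ¬HaltsWithin c t) k)⁻¹
  else 0

theorem primrec₂_haltingWeightApprox : Primrec₂ haltingWeightApprox := by
  have hR : PrimrecRel fun s (c : Code) => HaltsWithin c s :=
    primrecRel_haltsWithin.comp Primrec.snd Primrec.fst
  have hhalted : PrimrecPred fun p : Code × ℕ => ∃ s ≤ p.2, HaltsWithin p.1 s :=
    ((PrimrecRel.exists_mem_list hR).comp (Primrec.list_range.comp (Primrec.succ.comp .snd))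
      .fst).of_eq fun p => by simp
  have hnot : PrimrecRel fun (p : Code × ℕ) s => ∀ t < s, ¬HaltsWithin p.1 t :=
    ((PrimrecRel.forall_mem_list hR.not).comp (Primrec.list_range.comp .snd)
      (Primrec.fst.comp .fst)).of_eq fun p => by simp
  have htime := Primrec.nat_findGreatest .snd hnot
  exact Primrec.ite hhalted
    ((Primrec.rat_inv_natCast.comp (Primrec.nat_pow.comp (.const 2) htime)).of_eq fun p => by
      push_cast; rfl)
    (.const 0)

theorem haltingWeightApprox_eq (c : Code) (k : ℕ) :
    haltingWeightApprox c k = if ∃ s ≤ k, HaltsWithin c s then haltingWeight c else 0 := by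
  rw [haltingWeightApprox]
  split_ifs with hk
  · have h : ∃ s, HaltsWithin c s := hk.imp fun _ => And.right
    rw [haltingWeight, dif_pos h, Nat.findGreatest_eq_iff.mpr]
    refine ⟨(Nat.find_le_iff h k).mpr hk, fun _ => (Nat.le_find_iff h _).mp le_rfl,
      fun n hn _ hlt => ?_⟩
    exact (Nat.le_find_iff h n).mpr hlt |>.not_gt hn
  · rfl

theorem abs_haltingWeight_sub_approx_le (c : Code) (k : ℕ) :
    |haltingWeight c - haltingWeightApprox c k| ≤ (2 ^ k)⁻¹ := by
  rw [haltingWeightApprox_eq]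
  split_ifs with hk
  · simp
  rw [sub_zero, haltingWeight]
  split_ifs with h
  · have hlt : k < Nat.find h := by
      by_contra hle
      exact hk ((Nat.find_le_iff h k).mp (not_lt.mp hle))
    rw [abs_of_pos (by positivity)]
    exact inv_anti₀ (by positivity) (pow_le_pow_right₀ one_le_two hlt.le)
  · simp

theorem compRealSeq_haltingWeight : CompRealSeq fun n => (haltingWeight (ofNat Code n) : ℝ) := by
  refine ⟨fun m => haltingWeightApprox (ofNat Code m.unpair.1) m.unpair.2,
    (primrec₂_haltingWeightApprox.comp
      ((Primrec.ofNat Code).comp (Primrec.fst.comp Primrec.unpair))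
      (Primrec.snd.comp Primrec.unpair)).to_comp, fun n k => ?_⟩
  simp only [Nat.unpair_pair]
  rw [inv_pow]
  have h := Rat.cast_le (K := ℝ) |>.mpr (abs_haltingWeight_sub_approx_le (ofNat Code n) k)
  push_cast at h
  exact h

theorem not_computable_haltingWeight : ¬Computable fun n => haltingWeight (ofNat Code n) := by
  intro h
  refine ComputablePred.halting_problem 0 ?_
  have hne : PrimrecPred fun q : ℚ => q ≠ 0 := (Primrec.eq.comp .id (.const 0)).not
  refine ComputablePred.computable_iff.mpr
    ⟨_, hne.decide.to_comp.comp (h.comp Computable.encode), ?_⟩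
  funext c
  simp [haltingWeight_ne_zero_iff]

theorem stmt6 : ∃ x : ℕ → ℚ, CompRealSeq (fun n => (x n : ℝ)) ∧ ¬ Computable x :=
  ⟨_, compRealSeq_haltingWeight, not_computable_haltingWeight⟩
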